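/- For a six-qubit pure singlet state |ψ⟩ = Σ_i t_i|i⟩ ∈ (ℂ²)^{⊗6} (so each nonzero coefficient's multi-index contains exactly three 0's and three 1's), if all two-qubit marginals were maximally mixed then Σ over all pairs {α,β} of [⟨00|ρ_{αβ}|00⟩ + ⟨11|ρ_{αβ}|11⟩] = 2·C(3,2)·Σ_i|t_i|² = 6 would equal (1/4)·2·C(6,2) = 15/2, contradicting normalization Σ_i|t_i|² = 1. Hence no six-qubit singlet state is 2-uniform. -/

import Mathlib

open scoped BigOperators ComplexConjugate

/-- The action of `U^{⊗n}` on the coefficient vector of a state in `(ℂ^d)^{⊗n}`. -/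
noncomputable def tensorAction {d n : ℕ} (U : Matrix (Fin d) (Fin d) ℂ)
    (t : (Fin n → Fin d) → ℂ) : (Fin n → Fin d) → ℂ :=
  fun i => ∑ j : Fin n → Fin d, (∏ α : Fin n, U (i α) (j α)) * t j

/-- The two-particle reduced density matrix of particles `α ≠ β`. -/
noncomputable def rho2 {d n : ℕ} (t : (Fin n → Fin d) → ℂ) (α β : Fin n)
    (a₁ a₂ b₁ b₂ : Fin d) : ℂ :=
  ∑ i : Fin n → Fin d,
    if i α = a₁ ∧ i β = a₂ then
      t i * conj (t (Function.update (Function.update i α b₁) β b₂))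
    else 0

/-!
A phase gate `diag(ζ, 1)`, with `ζ` a primitive `(n+1)`-th root of unity, multiplies the
coefficient `t i` by `ζ ^ (number of zeros of i)`; since a singlet is an eigenvector, all indices
in its support have the same number `k` of zeros. The bit flip `X^{⊗n}` maps the support onto
itself and `k` to `n - k`, so `n = 2k`. For `n = 6` every supported index then has exactly
`C(3,2) + C(3,2) = 6` ordered pairs `α < β` with equal entries, which weights the diagonal
marginal entries to a total of `6 · ∑ |tᵢ|² = 6`, while maximally mixed marginals would give
`C(6,2) · (1/4 + 1/4) = 15/2`.
-/

open Finset

def IsSinglet {d n : ℕ} (t : (Fin n → Fin d) → ℂ) : Prop :=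
  ∀ U ∈ Matrix.unitaryGroup (Fin d) ℂ, ∃ c : ℂ, tensorAction U t = c • t

namespace Matrix

variable {n α : Type*} [Fintype n] [DecidableEq n] [CommRing α] [StarRing α]

lemma diagonal_mem_unitaryGroup {v : n → α} (hv : ∀ a, v a * star (v a) = 1) :
    diagonal v ∈ unitaryGroup n α := by
  rw [mem_unitaryGroup_iff, star_eq_conjTranspose, diagonal_conjTranspose,
    diagonal_mul_diagonal, ← diagonal_one]
  exact congrArg diagonal (funext hv)

lemma permMatrix_mem_unitaryGroup (σ : Equiv.Perm n) : σ.permMatrix α ∈ unitaryGroup n α := by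
  rw [mem_unitaryGroup_iff, star_eq_conjTranspose, conjTranspose_permMatrix, ← permMatrix_mul,
    inv_mul_cancel, permMatrix_one]

end Matrix

section TensorAction

variable {d n : ℕ}

lemma tensorAction_diagonal (v : Fin d → ℂ) (t : (Fin n → Fin d) → ℂ) (i : Fin n → Fin d) :
    tensorAction (Matrix.diagonal v) t i = (∏ α, v (i α)) * t i := by
  unfold tensorAction
  rw [sum_eq_single i]
  · simp
  · intro j _ hj
    obtain ⟨α, hα⟩ := Function.ne_iff.mp hj
    rw [prod_eq_zero (mem_univ α) (Matrix.diagonal_apply_ne v (Ne.symm hα)), zero_mul]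
  · simp

lemma tensorAction_permMatrix (σ : Equiv.Perm (Fin d)) (t : (Fin n → Fin d) → ℂ)
    (i : Fin n → Fin d) : tensorAction (σ.permMatrix ℂ) t i = t (σ ∘ i) := by
  unfold tensorAction
  rw [sum_eq_single (σ ∘ i)]
  · simp [PEquiv.toMatrix_apply]
  · intro j _ hj
    obtain ⟨α, hα⟩ := Function.ne_iff.mp hj
    rw [prod_eq_zero (mem_univ α) (by simpa [PEquiv.toMatrix_apply] using hα.symm), zero_mul]
  · simp

end TensorAction

section Qubits

variable {n : ℕ}

def zeroCount (i : Fin n → Fin 2) : ℕ := #{α | i α = 0}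

lemma zeroCount_lt_succ (i : Fin n → Fin 2) : zeroCount i < n + 1 :=
  Nat.lt_succ_of_le ((card_filter_le _ _).trans_eq (card_fin n))

lemma zeroCount_swap_comp_add (i : Fin n → Fin 2) :
    zeroCount (Equiv.swap 0 1 ∘ i) + zeroCount i = n := by
  have hswap : ∀ a : Fin 2, Equiv.swap 0 1 a = 0 ↔ ¬a = 0 := by decide
  simp only [zeroCount, Function.comp_apply, hswap]
  rw [add_comm, card_filter_add_card_filter_not, card_univ, Fintype.card_fin]

lemma prod_phase_eq_pow_zeroCount (z : ℂ) (i : Fin n → Fin 2) :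
    ∏ α, ![z, 1] (i α) = z ^ zeroCount i := by
  rw [zeroCount, ← prod_const, prod_filter]
  refine prod_congr rfl fun α _ => ?_
  generalize i α = a
  fin_cases a <;> simp

variable {t : (Fin n → Fin 2) → ℂ}

lemma IsSinglet.zeroCount_eq (ht : IsSinglet t) {i j : Fin n → Fin 2} (hi : t i ≠ 0)
    (hj : t j ≠ 0) : zeroCount i = zeroCount j := by
  set ζ := Complex.exp (2 * Real.pi * Complex.I / (n + 1 : ℕ))
  have hζ : IsPrimitiveRoot ζ (n + 1) := Complex.isPrimitiveRoot_exp _ n.succ_ne_zero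
  have hunit : ∀ a : Fin 2, ![ζ, 1] a * star (![ζ, 1] a) = 1 := by
    have : ζ * conj ζ = 1 := by
      rw [Complex.mul_conj, Complex.normSq_eq_norm_sq, hζ.norm'_eq_one n.succ_ne_zero]
      norm_num
    intro a
    fin_cases a <;> simp [this]
  obtain ⟨c, hc⟩ := ht _ (Matrix.diagonal_mem_unitaryGroup hunit)
  have hpow : ∀ k, t k ≠ 0 → ζ ^ zeroCount k = c := fun k hk => by
    have := congrFun hc k
    rw [tensorAction_diagonal, prod_phase_eq_pow_zeroCount, Pi.smul_apply, smul_eq_mul] at this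
    exact mul_right_cancel₀ hk this
  exact hζ.pow_inj (zeroCount_lt_succ i) (zeroCount_lt_succ j) ((hpow i hi).trans (hpow j hj).symm)

lemma IsSinglet.apply_swap_comp_ne_zero (ht : IsSinglet t) {i : Fin n → Fin 2} (hi : t i ≠ 0) :
    t (Equiv.swap 0 1 ∘ i) ≠ 0 := by
  obtain ⟨c, hc⟩ := ht _ (Matrix.permMatrix_mem_unitaryGroup (Equiv.swap (0 : Fin 2) 1))
  have hflip : ∀ k, t (Equiv.swap 0 1 ∘ k) = c * t k := fun k => by
    simpa [tensorAction_permMatrix] using congrFun hc k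
  have hinv : Equiv.swap 0 1 ∘ (Equiv.swap 0 1 ∘ i) = i := by
    ext α
    simp
  intro h
  apply hi
  rw [← hinv, hflip, h, mul_zero]

/-- The equal-occurrence lemma. -/
lemma IsSinglet.two_mul_zeroCount (ht : IsSinglet t) {i : Fin n → Fin 2} (hi : t i ≠ 0) :
    2 * zeroCount i = n := by
  have := ht.zeroCount_eq (ht.apply_swap_comp_ne_zero hi) hi
  have := zeroCount_swap_comp_add i
  omega

end Qubits

section Marginals

variable {n : ℕ}

lemma rho2_diag {d : ℕ} (t : (Fin n → Fin d) → ℂ) (α β : Fin n) (a : Fin d) :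
    rho2 t α β a a a a =
      ∑ i, if i α = a ∧ i β = a then (Complex.normSq (t i) : ℂ) else 0 := by
  refine sum_congr rfl fun i _ => ?_
  split_ifs with h
  · obtain ⟨rfl, hβ⟩ := h
    rw [Function.update_eq_self, ← hβ, Function.update_eq_self, Complex.mul_conj]
  · rfl

lemma rho2_zero_add_rho2_one (t : (Fin n → Fin 2) → ℂ) (α β : Fin n) :
    rho2 t α β 0 0 0 0 + rho2 t α β 1 1 1 1 =
      ∑ i, if i α = i β then (Complex.normSq (t i) : ℂ) else 0 := by
  rw [rho2_diag, rho2_diag, ← sum_add_distrib]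
  refine sum_congr rfl fun i _ => ?_
  generalize i α = a, i β = b
  fin_cases a <;> fin_cases b <;> simp

def alignedPairs (i : Fin n → Fin 2) : ℕ := #{p : Fin n × Fin n | p.1 < p.2 ∧ i p.1 = i p.2}

lemma sum_pairs_rho2_diag (t : (Fin n → Fin 2) → ℂ) :
    (∑ α, ∑ β, if α < β then rho2 t α β 0 0 0 0 + rho2 t α β 1 1 1 1 else 0) =
      ∑ i, (alignedPairs i : ℂ) * Complex.normSq (t i) := calc
  _ = ∑ p : Fin n × Fin n, ∑ i,
        if p.1 < p.2 ∧ i p.1 = i p.2 then (Complex.normSq (t i) : ℂ) else 0 := by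
    rw [← Fintype.sum_prod_type']
    refine sum_congr rfl fun p _ => ?_
    rw [rho2_zero_add_rho2_one]
    split_ifs with h <;> simp [h]
  _ = ∑ i, ∑ p : Fin n × Fin n,
        if p.1 < p.2 ∧ i p.1 = i p.2 then (Complex.normSq (t i) : ℂ) else 0 := sum_comm
  _ = _ := sum_congr rfl fun i _ => by rw [← sum_filter, sum_const, nsmul_eq_mul]; rfl

end Marginals

lemma alignedPairs_eq_six_of_zeroCount_eq_three :
    ∀ i : Fin 6 → Fin 2, zeroCount i = 3 → alignedPairs i = 6 := by
  decide

theorem stmt_13_general (t : (Fin 6 → Fin 2) → ℂ)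
    (hnorm : ∑ i : Fin 6 → Fin 2, Complex.normSq (t i) = 1)
    (hsinglet : ∀ U ∈ Matrix.unitaryGroup (Fin 2) ℂ, ∃ c : ℂ, tensorAction U t = c • t) :
    (∑ α : Fin 6, ∑ β : Fin 6,
      (if α < β then rho2 t α β 0 0 0 0 + rho2 t α β 1 1 1 1 else 0)) = (6 : ℂ) ∧
    ¬ (∀ α β : Fin 6, α ≠ β → ∀ a₁ a₂ b₁ b₂ : Fin 2,
        rho2 t α β a₁ a₂ b₁ b₂ =
          if a₁ = b₁ ∧ a₂ = b₂ then (1 / 4 : ℂ) else 0) := by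
  have hpairs : ∀ i, t i ≠ 0 → alignedPairs i = 6 := fun i hi =>
    alignedPairs_eq_six_of_zeroCount_eq_three i
      (by have := IsSinglet.two_mul_zeroCount hsinglet hi; omega)
  have hsum : (∑ α : Fin 6, ∑ β : Fin 6,
      (if α < β then rho2 t α β 0 0 0 0 + rho2 t α β 1 1 1 1 else 0)) = (6 : ℂ) := by
    rw [sum_pairs_rho2_diag]
    calc ∑ i, (alignedPairs i : ℂ) * Complex.normSq (t i)
        = ∑ i, 6 * (Complex.normSq (t i) : ℂ) := sum_congr rfl fun i _ => by
          by_cases hi : t i = 0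
          · simp [hi]
          · rw [hpairs i hi]; norm_num
      _ = 6 := by rw [← mul_sum, ← Complex.ofReal_sum, hnorm]; norm_num
  refine ⟨hsum, fun hmixed => ?_⟩
  have hmixed_sum : (∑ α : Fin 6, ∑ β : Fin 6,
      (if α < β then rho2 t α β 0 0 0 0 + rho2 t α β 1 1 1 1 else 0)) = 15 / 2 := calc
    _ = ∑ α : Fin 6, ∑ β : Fin 6, if α < β then (1 / 2 : ℂ) else 0 :=
      sum_congr rfl fun α _ => sum_congr rfl fun β _ => by
        split_ifs with hlt
        · rw [hmixed α β hlt.ne, hmixed α β hlt.ne]; norm_num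
        · rfl
    _ = 15 / 2 := by simp [Fin.sum_univ_succ]; norm_num
  norm_num [hsum] at hmixed_sum

/-- For a normalized six-qubit pure singlet state, the sum over all qubit pairs of the
diagonal marginal entries `⟨00|ρ_{αβ}|00⟩ + ⟨11|ρ_{αβ}|11⟩` equals
`2·C(3,2)·∑|tᵢ|² = 6`, whereas 2-uniformity would require it to be
`(1/4)·2·C(6,2) = 15/2`; hence no six-qubit singlet state is 2-uniform. -/
theorem stmt_13 (t : (Fin 6 → Fin 2) → ℂ) (ht : t ≠ 0)
    (hnorm : ∑ i : Fin 6 → Fin 2, Complex.normSq (t i) = 1)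
    (hsinglet : ∀ U ∈ Matrix.unitaryGroup (Fin 2) ℂ, ∃ c : ℂ, tensorAction U t = c • t) :
    (∑ α : Fin 6, ∑ β : Fin 6,
      (if α < β then rho2 t α β 0 0 0 0 + rho2 t α β 1 1 1 1 else 0)) = (6 : ℂ) ∧
    ¬ (∀ α β : Fin 6, α ≠ β → ∀ a₁ a₂ b₁ b₂ : Fin 2,
        rho2 t α β a₁ a₂ b₁ b₂ =
          if a₁ = b₁ ∧ a₂ = b₂ then (1 / 4 : ℂ) else 0) :=
  stmt_13_general t hnorm hsinglet
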